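/- arXiv:1504.02923 — 2 statements merged into one kernel-verified Lean document; each statement's English description precedes it below -/
import Mathlib

section
/- Let λ > 0 and p < 1, let A ∈ ℝ^{m×n} have spectral norm ‖A‖ < 1, and let b ∈ ℝᵐ. A point x ∈ ℝⁿ satisfies x = S_p(x − Aᵀ(Ax − b)) (i.e., x is a fixed point of the IPS iteration) if and only if x satisfies the first-order stationarity condition of F_p, namely: for every index j, if x_j ≠ 0 then λ·g_p'(x_j) + [Aᵀ(Ax − b)]_j = 0 (where g_p' denotes the derivative of g_p, which exists at every nonzero point), and if x_j = 0 then |[Aᵀ(Ax − b)]_j| ≤ λ. -/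
open MeasureTheory Filter
open scoped BigOperators

noncomputable section

/-- `l0 w` is the number of nonzero entries of `w`. -/
def l0 {n : ℕ} (w : Fin n → ℝ) : ℕ := (Finset.univ.filter fun i => w i ≠ 0).card

/-- Euclidean (`ℓ²`) norm of a vector. -/
def l2 {k : ℕ} (v : Fin k → ℝ) : ℝ := Real.sqrt (∑ i, v i ^ 2)

/-- Restriction `h_T` of a vector to a finset `T` (zero outside `T`). -/
def restr {n : ℕ} (T : Finset (Fin n)) (h : Fin n → ℝ) : Fin n → ℝ :=
  fun i => if i ∈ T then h i else 0

/-- Unique Representation Property: every `m` columns of `A` are linearly independent. -/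
def URP {m n : ℕ} (A : Matrix (Fin m) (Fin n) ℝ) : Prop :=
  ∀ S : Finset (Fin n), S.card = m →
    LinearIndependent ℝ (fun j : S => (fun i : Fin m => A i (j : Fin n)))

/-- Conditions (I)-(II) on the penalty component `g`. -/
def PenaltyConds (g : ℝ → ℝ) : Prop :=
  g 0 = 0 ∧ (∀ w, g (-w) = g w) ∧ Continuous g ∧
    ((StrictMonoOn g (Set.Ioi 0) ∧ StrictConcaveOn ℝ (Set.Ioi 0) g) ∨
      (∃ γ : ℝ, 0 < γ ∧ StrictMonoOn g (Set.Ioc 0 γ) ∧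
        StrictConcaveOn ℝ (Set.Ioc 0 γ) g ∧ ∀ w, γ ≤ w → g w = g γ))

/-- Spectral (`ℓ² → ℓ²` operator) norm of a matrix. -/
def specNorm {m n : ℕ} (A : Matrix (Fin m) (Fin n) ℝ) : ℝ :=
  sSup {c | ∃ v : Fin n → ℝ, l2 v ≤ 1 ∧ c = l2 (A.mulVec v)}

/-- The `p`-shrinkage function `s_{λ,p}`. -/
def pshrinkFun (lam p t : ℝ) : ℝ :=
  if t ≤ 0 then 0 else max (t - lam ^ (2 - p) * t ^ (p - 1)) 0

/-- `f_p(x) = ∫₀ˣ s_{λ,p}(t) dt`. -/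
def pf (lam p x : ℝ) : ℝ := ∫ t in (0 : ℝ)..x, pshrinkFun lam p t

/-- Legendre–Fenchel transform `f_p*(w) = sup_{x ≥ 0} (x·w − f_p(x))`. -/
def pfstar (lam p w : ℝ) : ℝ := sSup ((fun x => x * w - pf lam p x) '' Set.Ici 0)

/-- The induced `p`-shrinkage penalty component `g_p`. -/
def gp (lam p w : ℝ) : ℝ := (pfstar lam p |w| - w ^ 2 / 2) / lam

/-- The induced `p`-shrinkage penalty `G_p`. -/
def Gp (lam p : ℝ) {n : ℕ} (w : Fin n → ℝ) : ℝ := ∑ i, gp lam p (w i)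

/-- The `p`-shrinkage mapping `S_p`. -/
def Sp (lam p : ℝ) {n : ℕ} (x : Fin n → ℝ) : Fin n → ℝ :=
  fun i => pshrinkFun lam p |x i| * Real.sign (x i)

/-- The objective `F_p(x) = λ G_p(x) + ½‖Ax − b‖₂²`. -/
def Fp (lam p : ℝ) {m n : ℕ} (A : Matrix (Fin m) (Fin n) ℝ) (b : Fin m → ℝ)
    (x : Fin n → ℝ) : ℝ :=
  lam * Gp lam p x + (1 / 2) * (l2 (A.mulVec x - b)) ^ 2

/-- Firm-thresholding penalty component. -/
def gfirm (μ w : ℝ) : ℝ := if |w| ≤ μ then |w| - w ^ 2 / (2 * μ) else μ / 2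

/-- Firm-thresholding penalty. -/
def Gfirm (μ : ℝ) {n : ℕ} (w : Fin n → ℝ) : ℝ := ∑ i, gfirm μ (w i)

/-- The `m × m` submatrix `A_S` of the columns of `A` indexed by `S`. -/
def colsub {m n : ℕ} (A : Matrix (Fin m) (Fin n) ℝ)
    (S : {S : Finset (Fin n) // S.card = m}) : Matrix (Fin m) (Fin m) ℝ :=
  Matrix.of fun i j => A i ((S.1.orderIsoOfFin S.2 j : Fin n))

/-- `α_S = ‖A_S⁻¹ b‖_{-∞}`. -/
def alphaS {m n : ℕ} (A : Matrix (Fin m) (Fin n) ℝ) (b : Fin m → ℝ)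
    (S : {S : Finset (Fin n) // S.card = m}) : ℝ :=
  ⨅ i, |((colsub A S)⁻¹).mulVec b i|

/-- `β_S = ‖A_S⁻¹ b‖_∞`. -/
def betaS {m n : ℕ} (A : Matrix (Fin m) (Fin n) ℝ) (b : Fin m → ℝ)
    (S : {S : Finset (Fin n) // S.card = m}) : ℝ :=
  ⨆ i, |((colsub A S)⁻¹).mulVec b i|

/-- `‖A_S⁻¹‖` (spectral norm). -/
def nrmInv {m n : ℕ} (A : Matrix (Fin m) (Fin n) ℝ)
    (S : {S : Finset (Fin n) // S.card = m}) : ℝ :=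
  specNorm ((colsub A S)⁻¹)


/-!
The shrinkage `s = s_{λ,p}` is monotone, vanishes on `(-∞, λ]` and maps `[λ, ∞)` bijectively
onto `[0, ∞)`; let `X` be its inverse there. Since `f_p' = s` is monotone, the tangent-line
inequality `s a (x - a) ≤ f_p x - f_p a` shows that the supremum defining `f_p*(w)`, `w ≥ 0`, is
attained at `X w`, and that `X w` is a subgradient of `f_p*` at `w`. A continuous choice of
subgradients is a derivative, so `λ g_p'(w) = X(|w|) sign w - w` for `w ≠ 0`.
Coordinatewise, with `y = x_j - [Aᵀ(Ax - b)]_j`, the fixed-point equation `x_j = s(|y|) sign y`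
says that either `|y| ≤ λ` and `x_j = 0`, or `x_j ≠ 0` and `y = X(|x_j|) sign x_j`: these are
exactly the two stationarity conditions.
-/

open Set Function Topology

namespace Real

lemma sign_eq_coe_sign (r : ℝ) : Real.sign r = (SignType.sign r : ℝ) := by
  rcases lt_trichotomy r 0 with h | rfl | h
  · simp [Real.sign_of_neg h, h]
  · simp
  · simp [Real.sign_of_pos h, h]

end Real

lemma abs_mul_coe_sign {a r : ℝ} (ha : 0 < a) (hr : r ≠ 0) : |a * SignType.sign r| = a := by
  rcases hr.lt_or_gt with h | h <;> simp [h, abs_of_pos ha]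

lemma sign_mul_coe_sign {a : ℝ} (ha : 0 < a) (r : ℝ) :
    SignType.sign (a * SignType.sign r) = SignType.sign r := by
  rw [sign_mul, sign_pos ha, one_mul]
  rcases lt_trichotomy r 0 with h | rfl | h <;> simp [*]

theorem hasDerivAt_of_subgradient {F X : ℝ → ℝ} {w₀ : ℝ}
    (h₀ : ∀ᶠ w in 𝓝 w₀, F w₀ + X w₀ * (w - w₀) ≤ F w)
    (h₁ : ∀ᶠ w in 𝓝 w₀, F w + X w * (w₀ - w) ≤ F w₀)
    (hX : ContinuousAt X w₀) : HasDerivAt F (X w₀) w₀ := by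
  rw [hasDerivAt_iff_isLittleO, Asymptotics.isLittleO_iff]
  intro ε hε
  filter_upwards [h₀, h₁, Metric.tendsto_nhds.1 hX ε hε] with w hw₀ hw₁ hXw
  -- the two subgradient inequalities squeeze the remainder between `0` and this product
  have hslope : (X w - X w₀) * (w - w₀) ≤ ε * |w - w₀| := by
    calc (X w - X w₀) * (w - w₀) ≤ |X w - X w₀| * |w - w₀| := by
          rw [← abs_mul]; exact le_abs_self _
      _ ≤ ε * |w - w₀| := by gcongr; exact (Real.dist_eq _ _ ▸ hXw).le
  rw [Real.norm_eq_abs, Real.norm_eq_abs, smul_eq_mul, abs_le]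
  constructor <;> nlinarith [abs_nonneg (w - w₀)]

theorem Monotone.mul_sub_le_intervalIntegral {g : ℝ → ℝ} (hg : Monotone g) (a x : ℝ) :
    g a * (x - a) ≤ ∫ t in a..x, g t := by
  rcases le_total a x with h | h
  · calc g a * (x - a) = ∫ _ in a..x, g a := by simp [mul_comm]
      _ ≤ ∫ t in a..x, g t := intervalIntegral.integral_mono_on h intervalIntegrable_const
          hg.intervalIntegrable fun t ht => hg ht.1
  · rw [intervalIntegral.integral_symm]
    calc g a * (x - a) = -∫ _ in x..a, g a := by simp; ring
      _ ≤ -∫ t in x..a, g t := neg_le_neg <| intervalIntegral.integral_mono_on h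
          hg.intervalIntegrable intervalIntegrable_const fun t ht => hg ht.2

section PShrinkage

variable {lam p : ℝ}

lemma pshrinkFun_nonneg (lam p t : ℝ) : 0 ≤ pshrinkFun lam p t := by
  unfold pshrinkFun
  split_ifs
  exacts [le_rfl, le_max_right _ _]

lemma pshrinkFun_eq_zero_of_le (hp : p ≤ 1) {t : ℝ} (ht : t ≤ lam) :
    pshrinkFun lam p t = 0 := by
  unfold pshrinkFun
  split_ifs with h0
  · rfl
  have ht0 : 0 < t := not_le.1 h0
  refine max_eq_right (sub_nonpos.2 ?_)
  calc t = t ^ (2 - p) * t ^ (p - 1) := by rw [← Real.rpow_add ht0]; norm_num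
    _ ≤ lam ^ (2 - p) * t ^ (p - 1) := by gcongr; linarith

lemma pshrinkFun_eq_of_le (hlam : 0 < lam) (hp : p ≤ 1) {t : ℝ} (ht : lam ≤ t) :
    pshrinkFun lam p t = t - lam ^ (2 - p) * t ^ (p - 1) := by
  have ht0 : 0 < t := hlam.trans_le ht
  rw [pshrinkFun, if_neg ht0.not_ge]
  refine max_eq_left (sub_nonneg.2 ?_)
  calc lam ^ (2 - p) * t ^ (p - 1) ≤ t ^ (2 - p) * t ^ (p - 1) := by gcongr; linarith
    _ = t := by rw [← Real.rpow_add ht0]; norm_num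

lemma pshrinkFun_strictMonoOn (hlam : 0 < lam) (hp : p ≤ 1) :
    StrictMonoOn (pshrinkFun lam p) (Ici lam) := by
  intro a ha b hb hab
  rw [pshrinkFun_eq_of_le hlam hp ha, pshrinkFun_eq_of_le hlam hp hb]
  have hpow : b ^ (p - 1) ≤ a ^ (p - 1) :=
    Real.rpow_le_rpow_of_nonpos (hlam.trans_le ha) hab.le (by linarith)
  have := mul_le_mul_of_nonneg_left hpow (Real.rpow_nonneg hlam.le (2 - p))
  linarith

lemma pshrinkFun_monotone (hlam : 0 < lam) (hp : p ≤ 1) : Monotone (pshrinkFun lam p) := by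
  intro a b hab
  rcases le_total a lam with ha | ha
  · rw [pshrinkFun_eq_zero_of_le hp ha]
    exact pshrinkFun_nonneg lam p b
  · exact (pshrinkFun_strictMonoOn hlam hp).monotoneOn ha (ha.trans hab) hab

lemma pshrinkFun_pos (hlam : 0 < lam) (hp : p ≤ 1) {t : ℝ} (ht : lam < t) :
    0 < pshrinkFun lam p t := by
  simpa [pshrinkFun_eq_zero_of_le hp le_rfl] using
    pshrinkFun_strictMonoOn hlam hp self_mem_Ici ht.le ht

lemma pshrinkFun_continuousOn (hlam : 0 < lam) (hp : p ≤ 1) :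
    ContinuousOn (pshrinkFun lam p) (Ici lam) := by
  refine ContinuousOn.congr ?_ fun t ht => pshrinkFun_eq_of_le hlam hp ht
  exact continuousOn_id.sub (continuousOn_const.mul
    (continuousOn_id.rpow_const fun t ht => Or.inl (hlam.trans_le ht).ne'))

lemma pshrinkFun_surjOn (hlam : 0 < lam) (hp : p ≤ 1) :
    SurjOn (pshrinkFun lam p) (Ici lam) (Ici 0) := by
  intro w (hw : 0 ≤ w)
  have hle : lam ≤ lam + w := le_add_of_nonneg_right hw
  have hlarge : w ≤ pshrinkFun lam p (lam + w) := by
    rw [pshrinkFun_eq_of_le hlam hp hle]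
    have hpow : (lam + w) ^ (p - 1) ≤ lam ^ (p - 1) :=
      Real.rpow_le_rpow_of_nonpos hlam hle (by linarith)
    have hlam_pow : lam ^ (2 - p) * lam ^ (p - 1) = lam := by
      rw [← Real.rpow_add hlam]; norm_num
    nlinarith [Real.rpow_nonneg hlam.le (2 - p)]
  obtain ⟨t, ht, hst⟩ := intermediate_value_Icc hle
    ((pshrinkFun_continuousOn hlam hp).mono Icc_subset_Ici_self)
    ⟨(pshrinkFun_eq_zero_of_le hp le_rfl).symm ▸ hw, hlarge⟩
  exact ⟨t, ht.1, hst⟩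

def pshrinkInv (lam p : ℝ) : ℝ → ℝ := invFunOn (pshrinkFun lam p) (Ici lam)

lemma le_pshrinkInv (hlam : 0 < lam) (hp : p ≤ 1) {w : ℝ} (hw : 0 ≤ w) :
    lam ≤ pshrinkInv lam p w :=
  invFunOn_mem (pshrinkFun_surjOn hlam hp hw)

lemma pshrinkFun_pshrinkInv (hlam : 0 < lam) (hp : p ≤ 1) {w : ℝ} (hw : 0 ≤ w) :
    pshrinkFun lam p (pshrinkInv lam p w) = w :=
  invFunOn_eq (pshrinkFun_surjOn hlam hp hw)

lemma pshrinkInv_pshrinkFun (hlam : 0 < lam) (hp : p ≤ 1) {t : ℝ} (ht : lam ≤ t) :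
    pshrinkInv lam p (pshrinkFun lam p t) = t :=
  (pshrinkFun_strictMonoOn hlam hp).injOn.leftInvOn_invFunOn ht

lemma lt_pshrinkInv (hlam : 0 < lam) (hp : p ≤ 1) {w : ℝ} (hw : 0 < w) :
    lam < pshrinkInv lam p w := by
  refine (le_pshrinkInv hlam hp hw.le).lt_of_ne fun h => hw.ne' ?_
  rw [← pshrinkFun_pshrinkInv hlam hp hw.le, ← h, pshrinkFun_eq_zero_of_le hp le_rfl]

lemma pshrinkInv_monotoneOn (hlam : 0 < lam) (hp : p ≤ 1) :
    MonotoneOn (pshrinkInv lam p) (Ici 0) := by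
  intro a (ha : 0 ≤ a) b (hb : 0 ≤ b) hab
  rwa [← (pshrinkFun_strictMonoOn hlam hp).le_iff_le (le_pshrinkInv hlam hp ha)
    (le_pshrinkInv hlam hp hb), pshrinkFun_pshrinkInv hlam hp ha, pshrinkFun_pshrinkInv hlam hp hb]

lemma continuousAt_pshrinkInv (hlam : 0 < lam) (hp : p ≤ 1) {w : ℝ} (hw : 0 < w) :
    ContinuousAt (pshrinkInv lam p) w := by
  refine continuousAt_of_monotoneOn_of_image_mem_nhds
    ((pshrinkInv_monotoneOn hlam hp).mono Ioi_subset_Ici_self) (Ioi_mem_nhds hw) ?_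
  refine mem_of_superset (Ioi_mem_nhds (lt_pshrinkInv hlam hp hw)) fun t (ht : lam < t) => ?_
  exact ⟨pshrinkFun lam p t, pshrinkFun_pos hlam hp ht, pshrinkInv_pshrinkFun hlam hp ht.le⟩

lemma pshrinkFun_mul_sub_le_pf (hlam : 0 < lam) (hp : p ≤ 1) (a x : ℝ) :
    pshrinkFun lam p a * (x - a) ≤ pf lam p x - pf lam p a := by
  have hmono := pshrinkFun_monotone hlam hp
  rw [pf, pf, intervalIntegral.integral_interval_sub_left hmono.intervalIntegrable
    hmono.intervalIntegrable]
  exact hmono.mul_sub_le_intervalIntegral a x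

lemma isGreatest_pfstar (hlam : 0 < lam) (hp : p ≤ 1) {w : ℝ} (hw : 0 ≤ w) :
    IsGreatest ((fun x => x * w - pf lam p x) '' Ici 0)
      (pshrinkInv lam p w * w - pf lam p (pshrinkInv lam p w)) := by
  refine ⟨⟨_, hlam.le.trans (le_pshrinkInv hlam hp hw), rfl⟩, ?_⟩
  rintro _ ⟨x, -, rfl⟩
  have := pshrinkFun_mul_sub_le_pf hlam hp (pshrinkInv lam p w) x
  rw [pshrinkFun_pshrinkInv hlam hp hw] at this
  dsimp only
  linarith

lemma pfstar_eq (hlam : 0 < lam) (hp : p ≤ 1) {w : ℝ} (hw : 0 ≤ w) :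
    pfstar lam p w = pshrinkInv lam p w * w - pf lam p (pshrinkInv lam p w) :=
  (isGreatest_pfstar hlam hp hw).csSup_eq

lemma pfstar_add_mul_sub_le (hlam : 0 < lam) (hp : p ≤ 1) {w w' : ℝ} (hw : 0 ≤ w)
    (hw' : 0 ≤ w') : pfstar lam p w + pshrinkInv lam p w * (w' - w) ≤ pfstar lam p w' := by
  have := (isGreatest_pfstar hlam hp hw').2
    ⟨pshrinkInv lam p w, hlam.le.trans (le_pshrinkInv hlam hp hw), rfl⟩
  rw [pfstar_eq hlam hp hw, pfstar_eq hlam hp hw']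
  dsimp only at this
  linarith

lemma hasDerivAt_pfstar (hlam : 0 < lam) (hp : p ≤ 1) {w : ℝ} (hw : 0 < w) :
    HasDerivAt (pfstar lam p) (pshrinkInv lam p w) w :=
  hasDerivAt_of_subgradient
    ((eventually_gt_nhds hw).mono fun _ hw' => pfstar_add_mul_sub_le hlam hp hw.le hw'.le)
    ((eventually_gt_nhds hw).mono fun _ hw' => pfstar_add_mul_sub_le hlam hp hw'.le hw.le)
    (continuousAt_pshrinkInv hlam hp hw)

lemma hasDerivAt_gp (hlam : 0 < lam) (hp : p ≤ 1) {w : ℝ} (hw : w ≠ 0) :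
    HasDerivAt (gp lam p) ((pshrinkInv lam p |w| * SignType.sign w - w) / lam) w := by
  show HasDerivAt (fun w => (pfstar lam p |w| - w ^ 2 / 2) / lam) _ w
  refine ((((hasDerivAt_pfstar hlam hp (abs_pos.2 hw)).comp w (hasDerivAt_abs hw)).sub
    ((hasDerivAt_pow 2 w).div_const 2)).div_const lam).congr_deriv ?_
  norm_num

lemma lam_mul_deriv_gp (hlam : 0 < lam) (hp : p ≤ 1) {w : ℝ} (hw : w ≠ 0) :
    lam * deriv (gp lam p) w = pshrinkInv lam p |w| * SignType.sign w - w := by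
  rw [(hasDerivAt_gp hlam hp hw).deriv]
  field_simp

lemma eq_pshrinkFun_abs_mul_sign_iff (hlam : 0 < lam) (hp : p ≤ 1) {u y : ℝ} :
    u = pshrinkFun lam p |y| * SignType.sign y ↔
      (u = 0 ∧ |y| ≤ lam) ∨ (u ≠ 0 ∧ y = pshrinkInv lam p |u| * SignType.sign u) := by
  constructor
  · rintro rfl
    rcases le_or_gt |y| lam with hy | hy
    · exact .inl ⟨by simp [pshrinkFun_eq_zero_of_le hp hy], hy⟩
    have hs := pshrinkFun_pos hlam hp hy
    have hy0 : y ≠ 0 := by rintro rfl; simp at hy; linarith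
    have habs := abs_mul_coe_sign hs hy0
    refine .inr ⟨fun h => by simp [h] at habs; linarith, ?_⟩
    rw [habs, sign_mul_coe_sign hs, pshrinkInv_pshrinkFun hlam hp hy.le, abs_mul_sign]
  · rintro (⟨rfl, hy⟩ | ⟨hu, rfl⟩)
    · simp [pshrinkFun_eq_zero_of_le hp hy]
    have hX := hlam.trans (lt_pshrinkInv hlam hp (abs_pos.2 hu))
    rw [abs_mul_coe_sign hX hu, sign_mul_coe_sign hX, pshrinkFun_pshrinkInv hlam hp (abs_nonneg u),
      abs_mul_sign]

lemma eq_pshrinkFun_iff_stationary (hlam : 0 < lam) (hp : p ≤ 1) (u t : ℝ) :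
    u = pshrinkFun lam p |u - t| * Real.sign (u - t) ↔
      (u ≠ 0 → lam * deriv (gp lam p) u + t = 0) ∧ (u = 0 → |t| ≤ lam) := by
  rw [Real.sign_eq_coe_sign, eq_pshrinkFun_abs_mul_sign_iff hlam hp]
  by_cases hu : u = 0
  · simp [hu]
  · rw [lam_mul_deriv_gp hlam hp hu]
    simp only [hu, false_and, false_or, ne_eq, not_false_eq_true, true_and, forall_const,
      IsEmpty.forall_iff, and_true]
    constructor <;> intro h <;> linarith

end PShrinkage

theorem stmt15_general (lam p : ℝ) (hlam : 0 < lam) (hp : p < 1)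
    {m n : ℕ} (A : Matrix (Fin m) (Fin n) ℝ)
    (b : Fin m → ℝ) (x : Fin n → ℝ) :
    x = Sp lam p (x - A.transpose.mulVec (A.mulVec x - b)) ↔
      ∀ j : Fin n,
        (x j ≠ 0 →
          lam * deriv (gp lam p) (x j) + A.transpose.mulVec (A.mulVec x - b) j = 0) ∧
        (x j = 0 → |A.transpose.mulVec (A.mulVec x - b) j| ≤ lam) := by
  rw [funext_iff]
  refine forall_congr' fun j => ?_
  simpa [Sp] using
    eq_pshrinkFun_iff_stationary hlam hp.le (x j) (A.transpose.mulVec (A.mulVec x - b) j)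

/-- fixed points of the IPS iteration are exactly the first-order
stationary points of `F_p`. -/
theorem stmt15 (lam p : ℝ) (hlam : 0 < lam) (hp : p < 1)
    {m n : ℕ} (A : Matrix (Fin m) (Fin n) ℝ) (hA : specNorm A < 1)
    (b : Fin m → ℝ) (x : Fin n → ℝ) :
    x = Sp lam p (x - A.transpose.mulVec (A.mulVec x - b)) ↔
      ∀ j : Fin n,
        (x j ≠ 0 →
          lam * deriv (gp lam p) (x j) + A.transpose.mulVec (A.mulVec x - b) j = 0) ∧
        (x j = 0 → |A.transpose.mulVec (A.mulVec x - b) j| ≤ lam) :=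
  stmt15_general lam p hlam hp A b x

end
end

section
/- Let λ > 0 and 0 ≤ p < 1. Then g_p is coercive, i.e., g_p(w) → ∞ as |w| → ∞, and consequently, for any A ∈ ℝ^{m×n} with spectral norm ‖A‖ < 1, any b ∈ ℝᵐ, and any initializer x⁰, the IPS sequence {x^k} is bounded. -/
open MeasureTheory Filter
open scoped BigOperators

noncomputable section

section aux
open intervalIntegral
variable {lam p : ℝ} (hlam : 0 < lam) (hp0 : 0 ≤ p) (hp1 : p < 1)

lemma ps_nonneg (t : ℝ) : 0 ≤ pshrinkFun lam p t := by
  unfold pshrinkFun; split <;> simp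

include hlam in
lemma ps_le (t : ℝ) : pshrinkFun lam p t ≤ max t 0 := by
  unfold pshrinkFun; split
  · simp
  · next h =>
    push_neg at h
    refine max_le_max ?_ le_rfl
    have hc : 0 ≤ lam ^ (2 - p) * t ^ (p - 1) := by positivity
    linarith

include hlam hp1 in
lemma ps_mono : Monotone (pshrinkFun lam p) := by
  intro a b hab
  unfold pshrinkFun
  rcases le_or_gt a 0 with ha | ha
  · simp only [if_pos ha]
    split
    · simp
    · exact le_max_right _ _
  · rw [if_neg (not_le.2 ha), if_neg (not_le.2 (ha.trans_le hab))]
    refine max_le_max ?_ le_rfl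
    have h1 : b ^ (p - 1) ≤ a ^ (p - 1) :=
      Real.rpow_le_rpow_of_nonpos ha hab (by linarith)
    have hc : 0 ≤ lam ^ (2 - p) := le_of_lt (Real.rpow_pos_of_pos hlam _)
    nlinarith

include hlam hp1 in
lemma ps_intble (a b : ℝ) : IntervalIntegrable (pshrinkFun lam p) volume a b :=
  ((ps_mono hlam hp1).monotoneOn _).intervalIntegrable

include hlam hp1 in
lemma ps_ge (t : ℝ) (ht : 0 ≤ t) : t - lam ≤ pshrinkFun lam p t := by
  rcases le_or_gt t lam with h | h
  · exact le_trans (by linarith) (ps_nonneg t)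
  · have ht0 : 0 < t := hlam.trans h
    unfold pshrinkFun
    rw [if_neg (not_le.2 ht0)]
    refine le_trans ?_ (le_max_left _ _)
    have h1 : t ^ (p - 1) ≤ lam ^ (p - 1) :=
      Real.rpow_le_rpow_of_nonpos hlam h.le (by linarith)
    have h2 : lam ^ (2 - p) * lam ^ (p - 1) = lam := by
      rw [← Real.rpow_add hlam]; norm_num
    have hc : 0 ≤ lam ^ (2 - p) := le_of_lt (Real.rpow_pos_of_pos hlam _)
    nlinarith

include hlam hp1 in
lemma pf_le_sq (x : ℝ) (hx : 0 ≤ x) : pf lam p x ≤ x ^ 2 / 2 := by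
  have h := integral_mono_on (μ := volume) hx (ps_intble hlam hp1 0 x)
    (intervalIntegrable_id) (fun t ht => (ps_le hlam t).trans (by simp [max_le_iff, ht.1]))
  unfold pf
  rw [integral_id] at h
  simpa using h


include hlam hp1 in
lemma pf_ge (x : ℝ) (hx : 0 ≤ x) : x ^ 2 / 2 - lam * x ≤ pf lam p x := by
  have h := integral_mono_on (μ := volume) hx
    ((intervalIntegrable_id).sub (_root_.intervalIntegrable_const (c := lam)))
    (ps_intble hlam hp1 0 x)
    (fun t ht => ps_ge hlam hp1 t ht.1)
  rw [intervalIntegral.integral_sub intervalIntegrable_id (_root_.intervalIntegrable_const (c := lam)),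
    integral_id, intervalIntegral.integral_const] at h
  unfold pf
  simp only [smul_eq_mul, sub_zero] at h
  nlinarith [h]

include hlam hp0 hp1 in
lemma pf_log (x : ℝ) (hx : max lam 1 ≤ x) :
    pf lam p x ≤ x ^ 2 / 2 - lam ^ (2 - p) * (Real.log x - Real.log (max lam 1)) := by
  set T : ℝ := max lam 1 with hT
  have hT1 : (1:ℝ) ≤ T := le_max_right _ _
  have hT0 : (0:ℝ) < T := by linarith
  have hx0 : (0:ℝ) < x := lt_of_lt_of_le hT0 hx
  have hc : (0:ℝ) < lam ^ (2 - p) := Real.rpow_pos_of_pos hlam _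
  -- split the integral
  have hsplit : pf lam p x = (∫ t in (0:ℝ)..T, pshrinkFun lam p t)
      + ∫ t in T..x, pshrinkFun lam p t := by
    unfold pf
    rw [integral_add_adjacent_intervals (ps_intble hlam hp1 0 T) (ps_intble hlam hp1 T x)]
  have h1 : (∫ t in (0:ℝ)..T, pshrinkFun lam p t) ≤ T ^ 2 / 2 := pf_le_sq hlam hp1 T hT0.le
  -- pointwise bound on [T, x]
  have hpt : ∀ t ∈ Set.Icc T x, pshrinkFun lam p t ≤ t - lam ^ (2 - p) * t⁻¹ := by
    intro t ht
    have ht1 : (1:ℝ) ≤ t := hT1.trans ht.1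
    have ht0 : (0:ℝ) < t := by linarith
    have hrp : t ^ (-1:ℝ) ≤ t ^ (p - 1) := Real.rpow_le_rpow_of_exponent_le ht1 (by linarith)
    rw [Real.rpow_neg_one] at hrp
    have hcT : lam ^ (2 - p) ≤ t ^ 2 := by
      have h1 : lam ^ (2 - p) ≤ T ^ (2 - p) :=
        Real.rpow_le_rpow hlam.le (le_max_left _ _) (by linarith)
      have h2 : T ^ (2 - p) ≤ T ^ (2:ℝ) := Real.rpow_le_rpow_of_exponent_le hT1 (by linarith)
      have h3 : T ^ (2:ℝ) ≤ t ^ (2:ℝ) := Real.rpow_le_rpow hT0.le ht.1 (by norm_num)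
      have h4 : t ^ (2:ℝ) = t ^ 2 := by
        rw [show (2:ℝ) = ((2:ℕ):ℝ) by norm_num, Real.rpow_natCast]
      exact h1.trans (h2.trans (h3.trans_eq h4))
    unfold pshrinkFun
    rw [if_neg (not_le.2 ht0)]
    have hb : 0 ≤ t - lam ^ (2 - p) * t⁻¹ := by
      have h5 : lam ^ (2 - p) * t⁻¹ ≤ t ^ 2 * t⁻¹ :=
        mul_le_mul_of_nonneg_right hcT (by positivity)
      have h6 : t ^ 2 * t⁻¹ = t := by field_simp
      linarith
    refine max_le ?_ hb
    have h7 : lam ^ (2 - p) * t⁻¹ ≤ lam ^ (2 - p) * t ^ (p - 1) :=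
      mul_le_mul_of_nonneg_left hrp hc.le
    linarith
  -- integrate the bound on [T, x]
  have hcont : ContinuousOn (fun t : ℝ => t - lam ^ (2 - p) * t⁻¹) (Set.uIcc T x) := by
    apply ContinuousOn.sub continuousOn_id
    apply ContinuousOn.mul continuousOn_const
    apply ContinuousOn.inv₀ continuousOn_id
    intro t ht
    have : T ≤ t := by
      rw [Set.uIcc_of_le hx] at ht; exact ht.1
    exact ne_of_gt (lt_of_lt_of_le hT0 this)
  have hintble2 : IntervalIntegrable (fun t : ℝ => t - lam ^ (2 - p) * t⁻¹) volume T x :=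
    hcont.intervalIntegrable
  have h2 : (∫ t in T..x, pshrinkFun lam p t)
      ≤ ∫ t in T..x, (t - lam ^ (2 - p) * t⁻¹) :=
    integral_mono_on hx (ps_intble hlam hp1 T x) hintble2 hpt
  have hnot : (0:ℝ) ∉ Set.uIcc T x := by
    rw [Set.uIcc_of_le hx]
    intro h
    exact absurd h.1 (not_le.2 hT0)
  have hintinv : IntervalIntegrable (fun t : ℝ => lam ^ (2 - p) * t⁻¹) volume T x := by
    apply ContinuousOn.intervalIntegrable
    apply ContinuousOn.mul continuousOn_const
    apply ContinuousOn.inv₀ continuousOn_id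
    intro t ht h0
    exact hnot (h0 ▸ ht)
  have h3 : (∫ t in T..x, (t - lam ^ (2 - p) * t⁻¹))
      = (x ^ 2 / 2 - T ^ 2 / 2) - lam ^ (2 - p) * (Real.log x - Real.log T) := by
    rw [intervalIntegral.integral_sub intervalIntegrable_id hintinv, integral_id,
      intervalIntegral.integral_const_mul, integral_inv hnot,
      Real.log_div hx0.ne' hT0.ne']
    ring
  linarith

include hlam hp1 in
lemma pfstar_bdd (w : ℝ) :
    ∀ y ∈ (fun x => x * w - pf lam p x) '' Set.Ici 0, y ≤ (w + lam) ^ 2 / 2 := by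
  rintro y ⟨x, hx, rfl⟩
  have h := pf_ge hlam hp1 x hx
  simp only []
  nlinarith [sq_nonneg (x - (w + lam))]

include hlam hp1 in
lemma pfstar_bddAbove (w : ℝ) :
    BddAbove ((fun x => x * w - pf lam p x) '' Set.Ici 0) :=
  ⟨_, pfstar_bdd hlam hp1 w⟩

include hlam hp1 in
lemma pfstar_ge (w x : ℝ) (hx : 0 ≤ x) : x * w - pf lam p x ≤ pfstar lam p w :=
  le_csSup (pfstar_bddAbove hlam hp1 w) ⟨x, hx, rfl⟩

lemma pf_zero : pf lam p 0 = 0 := by unfold pf; simp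

include hlam hp1 in
lemma gp_nonneg (w : ℝ) : 0 ≤ gp lam p w := by
  unfold gp
  have h1 : |w| * |w| - pf lam p |w| ≤ pfstar lam p |w| :=
    pfstar_ge hlam hp1 |w| |w| (abs_nonneg w)
  have h2 : pf lam p |w| ≤ |w| ^ 2 / 2 := pf_le_sq hlam hp1 |w| (abs_nonneg w)
  have h3 : |w| ^ 2 = w ^ 2 := sq_abs w
  have : 0 ≤ pfstar lam p |w| - w ^ 2 / 2 := by nlinarith
  positivity

include hlam hp0 hp1 in
lemma gp_lower (w : ℝ) (hw : max lam 1 ≤ |w|) :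
    lam ^ (2 - p) / lam * (Real.log |w| - Real.log (max lam 1)) ≤ gp lam p w := by
  have h1 : |w| * |w| - pf lam p |w| ≤ pfstar lam p |w| :=
    pfstar_ge hlam hp1 |w| |w| (abs_nonneg w)
  have h2 := pf_log hlam hp0 hp1 |w| hw
  have h3 : |w| ^ 2 = w ^ 2 := sq_abs w
  unfold gp
  rw [div_mul_eq_mul_div]
  apply div_le_div_of_nonneg_right ?_ hlam.le
  nlinarith

include hlam hp0 hp1 in
lemma gp_coercive : Filter.Tendsto (gp lam p) (Filter.cocompact ℝ) Filter.atTop := by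
  set T : ℝ := max lam 1 with hT
  set c : ℝ := lam ^ (2 - p) / lam with hc
  have hcpos : 0 < c := div_pos (Real.rpow_pos_of_pos hlam _) hlam
  rw [cocompact_eq_atBot_atTop, Filter.tendsto_sup]
  constructor
  · -- along atBot
    refine tendsto_atTop_mono' _ (f₁ := fun w => c * (Real.log |w| - Real.log T)) ?_ ?_
    · filter_upwards [Filter.eventually_le_atBot (-T)] with w hw
      apply gp_lower hlam hp0 hp1
      rw [abs_of_nonpos (by nlinarith [le_max_right lam 1])]
      linarith
    · have h1 : Tendsto (fun w : ℝ => Real.log |w|) atBot atTop := by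
        apply Real.tendsto_log_atTop.comp
        exact (tendsto_neg_atBot_atTop).congr' (by
          filter_upwards [Filter.eventually_le_atBot (0:ℝ)] with w hw
          rw [abs_of_nonpos hw])
      exact Filter.Tendsto.const_mul_atTop hcpos (h1.atTop_add tendsto_const_nhds)
  · refine tendsto_atTop_mono' _ (f₁ := fun w => c * (Real.log |w| - Real.log T)) ?_ ?_
    · filter_upwards [Filter.eventually_ge_atTop T] with w hw
      apply gp_lower hlam hp0 hp1
      rw [abs_of_nonneg (by nlinarith [le_max_right lam 1])]
      exact hw
    · have h1 : Tendsto (fun w : ℝ => Real.log |w|) atTop atTop := by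
        apply Real.tendsto_log_atTop.comp
        exact tendsto_atTop_mono (fun w => le_abs_self w) tendsto_id
      exact Filter.Tendsto.const_mul_atTop hcpos (h1.atTop_add tendsto_const_nhds)

include hlam hp1 in
lemma pf_grad (t x : ℝ) (ht : 0 ≤ t) (hx : 0 ≤ x) :
    pshrinkFun lam p t * (x - t) ≤ pf lam p x - pf lam p t := by
  have hdiff : pf lam p x - pf lam p t = ∫ u in t..x, pshrinkFun lam p u := by
    unfold pf
    rw [← integral_interval_sub_left (ps_intble hlam hp1 0 x) (ps_intble hlam hp1 0 t)]
  rw [hdiff]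
  rcases le_total t x with h | h
  · have := integral_mono_on (μ := volume) h
      (_root_.intervalIntegrable_const (c := pshrinkFun lam p t))
      (ps_intble hlam hp1 t x)
      (fun u hu => ps_mono hlam hp1 hu.1)
    rw [intervalIntegral.integral_const, smul_eq_mul] at this
    nlinarith
  · have := integral_mono_on (μ := volume) h
      (ps_intble hlam hp1 x t)
      (_root_.intervalIntegrable_const (c := pshrinkFun lam p t))
      (fun u hu => ps_mono hlam hp1 hu.2)
    rw [intervalIntegral.integral_const, smul_eq_mul] at this
    rw [intervalIntegral.integral_symm]
    nlinarith

include hlam hp1 in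
lemma pfstar_shrink (t : ℝ) (ht : 0 ≤ t) :
    pfstar lam p (pshrinkFun lam p t) = t * pshrinkFun lam p t - pf lam p t := by
  apply le_antisymm
  · apply csSup_le (Set.Nonempty.image _ ⟨0, le_rfl⟩)
    rintro y ⟨x, hx, rfl⟩
    simp only []
    have := pf_grad hlam hp1 t x ht hx
    nlinarith
  · exact pfstar_ge hlam hp1 _ t ht

include hlam hp1 in
lemma key_prox (t u : ℝ) (ht : 0 ≤ t) (hu : 0 ≤ u) :
    pfstar lam p (pshrinkFun lam p t) - pshrinkFun lam p t * t ≤ pfstar lam p u - u * t := by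
  have h1 : t * u - pf lam p t ≤ pfstar lam p u := pfstar_ge hlam hp1 u t ht
  have h2 := pfstar_shrink hlam hp1 t ht
  nlinarith

include hlam hp1 in
lemma scalar_prox (z w : ℝ) :
    pfstar lam p |pshrinkFun lam p |z| * Real.sign z|
        - (pshrinkFun lam p |z| * Real.sign z) * z
      ≤ pfstar lam p |w| - w * z := by
  set S : ℝ := pshrinkFun lam p |z| * Real.sign z with hS
  have hps : 0 ≤ pshrinkFun lam p |z| := ps_nonneg _
  have hS1 : |S| = pshrinkFun lam p |z| := by
    rcases lt_trichotomy z 0 with h | h | h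
    · rw [hS, Real.sign_of_neg h]
      simp [abs_of_nonneg hps]
    · simp [hS, h, Real.sign_zero, pshrinkFun]
    · rw [hS, Real.sign_of_pos h]
      simp [abs_of_nonneg hps]
  have hS2 : S * z = pshrinkFun lam p |z| * |z| := by
    rcases lt_trichotomy z 0 with h | h | h
    · rw [hS, Real.sign_of_neg h, abs_of_neg h]; ring
    · simp [hS, h]
    · rw [hS, Real.sign_of_pos h, abs_of_pos h]; ring
  rw [hS1, hS2]
  have h1 := key_prox hlam hp1 |z| |w| (abs_nonneg z) (abs_nonneg w)
  have h2 : w * z ≤ |w| * |z| := by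
    calc w * z ≤ |w * z| := le_abs_self _
      _ = |w| * |z| := abs_mul w z
  linarith


section vec
variable {m n : ℕ}

lemma l2_nonneg (v : Fin n → ℝ) : 0 ≤ l2 v := Real.sqrt_nonneg _

lemma l2_sq (v : Fin n → ℝ) : l2 v ^ 2 = ∑ i, v i ^ 2 :=
  Real.sq_sqrt (Finset.sum_nonneg fun i _ => sq_nonneg _)

lemma l2_smul (c : ℝ) (v : Fin n → ℝ) : l2 (fun i => c * v i) = |c| * l2 v := by
  unfold l2
  rw [← Real.sqrt_sq_eq_abs, ← Real.sqrt_mul (sq_nonneg c), Finset.mul_sum]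
  congr 1
  exact Finset.sum_congr rfl fun i _ => by ring

lemma spec_bdd (A : Matrix (Fin m) (Fin n) ℝ) :
    ∀ y ∈ {c | ∃ v : Fin n → ℝ, l2 v ≤ 1 ∧ c = l2 (A.mulVec v)},
      y ≤ Real.sqrt (∑ i, ∑ j, A i j ^ 2) := by
  rintro y ⟨v, hv, rfl⟩
  have hs : ∑ j, v j ^ 2 ≤ 1 := by
    have h := l2_sq v
    nlinarith [l2_nonneg v]
  have h1 : ∑ i, A.mulVec v i ^ 2 ≤ ∑ i, ∑ j, A i j ^ 2 := by
    apply Finset.sum_le_sum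
    intro i _
    calc A.mulVec v i ^ 2 = (∑ j, A i j * v j) ^ 2 := rfl
      _ ≤ (∑ j, A i j ^ 2) * ∑ j, v j ^ 2 := Finset.sum_mul_sq_le_sq_mul_sq _ _ _
      _ ≤ (∑ j, A i j ^ 2) * 1 := by
          apply mul_le_mul_of_nonneg_left hs
          exact Finset.sum_nonneg fun j _ => sq_nonneg _
      _ = ∑ j, A i j ^ 2 := mul_one _
  unfold l2
  exact Real.sqrt_le_sqrt h1

lemma spec_le (A : Matrix (Fin m) (Fin n) ℝ) (v : Fin n → ℝ) :
    l2 (A.mulVec v) ≤ specNorm A * l2 v := by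
  rcases eq_or_lt_of_le (l2_nonneg v) with h0 | h0
  · have hv : ∀ i, v i = 0 := by
      intro i
      have hs : ∑ j, v j ^ 2 = 0 := by
        have := l2_sq v
        rw [← h0] at this
        simpa using this.symm
      have := (Finset.sum_eq_zero_iff_of_nonneg
        (fun j _ => sq_nonneg (v j))).1 hs i (Finset.mem_univ i)
      exact pow_eq_zero_iff (by norm_num) |>.1 this
    have : A.mulVec v = 0 := by
      funext i
      simp [Matrix.mulVec, dotProduct, funext hv]
    rw [this, ← h0, mul_zero]
    simp [l2]
  · set t := l2 v with ht
    have hmem : l2 (A.mulVec (fun i => t⁻¹ * v i))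
        ∈ {c | ∃ w : Fin n → ℝ, l2 w ≤ 1 ∧ c = l2 (A.mulVec w)} := by
      refine ⟨_, ?_, rfl⟩
      rw [l2_smul, abs_of_pos (inv_pos.2 h0), ← ht, inv_mul_cancel₀ h0.ne']
    have hb := le_csSup ⟨_, spec_bdd A⟩ hmem
    have heq : A.mulVec (fun i => t⁻¹ * v i) = fun i => t⁻¹ * A.mulVec v i := by
      funext i
      simp only [Matrix.mulVec, dotProduct, Finset.mul_sum]
      exact Finset.sum_congr rfl fun j _ => by ring
    rw [heq, l2_smul, abs_of_pos (inv_pos.2 h0)] at hb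
    have : t⁻¹ * l2 (A.mulVec v) ≤ specNorm A := hb
    calc l2 (A.mulVec v) = t * (t⁻¹ * l2 (A.mulVec v)) := by field_simp
      _ ≤ t * specNorm A := mul_le_mul_of_nonneg_left this h0.le
      _ = specNorm A * t := mul_comm _ _

lemma spec_contract {A : Matrix (Fin m) (Fin n) ℝ} (hA : specNorm A < 1)
    (v : Fin n → ℝ) : ∑ i, A.mulVec v i ^ 2 ≤ ∑ i, v i ^ 2 := by
  have h1 : l2 (A.mulVec v) ≤ l2 v := by
    calc l2 (A.mulVec v) ≤ specNorm A * l2 v := spec_le A v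
      _ ≤ 1 * l2 v := mul_le_mul_of_nonneg_right hA.le (l2_nonneg v)
      _ = l2 v := one_mul _
  have := l2_sq (A.mulVec v)
  have := l2_sq v
  nlinarith [l2_nonneg (A.mulVec v), l2_nonneg v]

end vec

include hlam hp1 in
lemma lam_gp (w : ℝ) : lam * gp lam p w = pfstar lam p |w| - w ^ 2 / 2 := by
  unfold gp
  rw [mul_comm, div_mul_cancel₀ _ hlam.ne']

include hlam hp1 in
lemma Fp_eq {m n : ℕ} (A : Matrix (Fin m) (Fin n) ℝ) (b : Fin m → ℝ) (x : Fin n → ℝ) :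
    Fp lam p A b x = (∑ i, pfstar lam p |x i|) - (∑ i, x i ^ 2) / 2
      + (∑ j, (A.mulVec x - b) j ^ 2) / 2 := by
  unfold Fp Gp
  rw [l2_sq, Finset.mul_sum]
  have h1 : ∑ i, lam * gp lam p (x i)
      = ∑ i, (pfstar lam p |x i| - x i ^ 2 / 2) :=
    Finset.sum_congr rfl fun i _ => lam_gp hlam hp1 (x i)
  rw [h1, Finset.sum_sub_distrib, ← Finset.sum_div]
  ring

include hlam hp1 in
lemma descent {m n : ℕ} (A : Matrix (Fin m) (Fin n) ℝ) (hA : specNorm A < 1)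
    (b : Fin m → ℝ) (y : Fin n → ℝ) :
    Fp lam p A b (Sp lam p (y - A.transpose.mulVec (A.mulVec y - b)))
      ≤ Fp lam p A b y := by
  set r : Fin m → ℝ := A.mulVec y - b with hr
  set z : Fin n → ℝ := y - A.transpose.mulVec r with hz
  set u : Fin n → ℝ := Sp lam p z with hu
  have star : ∑ i, (pfstar lam p |u i| - u i * z i)
      ≤ ∑ i, (pfstar lam p |y i| - y i * z i) :=
    Finset.sum_le_sum fun i _ => scalar_prox hlam hp1 (z i) (y i)
  set w : Fin n → ℝ := fun i => u i - y i with hw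
  -- adjoint identity
  have adj : ∑ i, w i * A.transpose.mulVec r i = ∑ j, A.mulVec w j * r j := by
    simp only [Matrix.mulVec, dotProduct, Matrix.transpose_apply,
      Finset.mul_sum, Finset.sum_mul]
    rw [Finset.sum_comm]
    exact Finset.sum_congr rfl fun j _ => Finset.sum_congr rfl fun i _ => by ring
  have contr : ∑ j, A.mulVec w j ^ 2 ≤ ∑ i, w i ^ 2 := spec_contract hA w
  -- rearrange star
  have hzdef : ∀ i, z i = y i - A.transpose.mulVec r i := fun i => rfl
  have star2 : (∑ i, pfstar lam p |u i|) - (∑ i, pfstar lam p |y i|)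
      ≤ ((∑ i, u i * y i) - ∑ i, y i ^ 2) - ∑ i, w i * A.transpose.mulVec r i := by
    have h1 : ∑ i, (u i * z i - y i * z i)
        = ((∑ i, u i * y i) - ∑ i, y i ^ 2) - ∑ i, w i * A.transpose.mulVec r i := by
      rw [← Finset.sum_sub_distrib, ← Finset.sum_sub_distrib]
      refine Finset.sum_congr rfl fun i _ => ?_
      rw [hzdef i]
      simp only [hw]
      ring
    rw [Finset.sum_sub_distrib] at h1
    rw [Finset.sum_sub_distrib, Finset.sum_sub_distrib] at star
    linarith [h1, star]
  -- expansion of the quadratic term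
  have hwj : ∀ j, A.mulVec u j - b j = A.mulVec w j + r j := by
    intro j
    simp only [hw, hr, Matrix.mulVec, dotProduct, Pi.sub_apply]
    have h2 : ∑ x, A j x * (u x - y x) = (∑ x, A j x * u x) - ∑ x, A j x * y x := by
      rw [← Finset.sum_sub_distrib]
      exact Finset.sum_congr rfl fun i _ => by ring
    rw [h2]
    ring
  have hQ : ∑ j, (A.mulVec u - b) j ^ 2
      = (∑ j, A.mulVec w j ^ 2) + 2 * (∑ j, A.mulVec w j * r j) + ∑ j, r j ^ 2 := by
    have h1 : ∀ j ∈ Finset.univ, (A.mulVec u - b) j ^ 2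
        = A.mulVec w j ^ 2 + 2 * (A.mulVec w j * r j) + r j ^ 2 := by
      intro j _
      have := hwj j
      simp only [Pi.sub_apply]
      rw [show A.mulVec u j - b j = A.mulVec w j + r j from this]
      ring
    rw [Finset.sum_congr rfl h1, Finset.sum_add_distrib, Finset.sum_add_distrib,
      ← Finset.mul_sum]
  have hM : ∑ i, w i ^ 2 = (∑ i, u i ^ 2) - 2 * (∑ i, u i * y i) + ∑ i, y i ^ 2 := by
    simp only [hw]
    calc ∑ x, (u x - y x) ^ 2 = ∑ x, (u x ^ 2 - 2 * (u x * y x) + y x ^ 2) :=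
          Finset.sum_congr rfl fun i _ => by ring
      _ = (∑ i, u i ^ 2) - 2 * (∑ i, u i * y i) + ∑ i, y i ^ 2 := by
          rw [Finset.sum_add_distrib, Finset.sum_sub_distrib, Finset.mul_sum]
  rw [Fp_eq hlam hp1, Fp_eq hlam hp1]
  have hry : (A.mulVec y - b) = r := rfl
  rw [hry]
  linarith [star2, adj, contr, hQ, hM]

end aux

/-- for `0 ≤ p < 1`, `g_p` is coercive and the IPS sequence is bounded. -/
theorem stmt17 (lam p : ℝ) (hlam : 0 < lam) (hp0 : 0 ≤ p) (hp1 : p < 1)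
    {m n : ℕ} (A : Matrix (Fin m) (Fin n) ℝ) (hA : specNorm A < 1)
    (b : Fin m → ℝ) (x : ℕ → Fin n → ℝ)
    (hiter : ∀ k : ℕ,
      x (k + 1) = Sp lam p (x k - A.transpose.mulVec (A.mulVec (x k) - b))) :
    Filter.Tendsto (gp lam p) (Filter.cocompact ℝ) Filter.atTop ∧
    ∃ R : ℝ, ∀ k : ℕ, l2 (x k) ≤ R := by
  refine ⟨gp_coercive hlam hp0 hp1, ?_⟩
  -- the objective decreases along iterations
  have hdec : ∀ k, Fp lam p A b (x k) ≤ Fp lam p A b (x 0) := by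
    intro k
    induction k with
    | zero => exact le_rfl
    | succ k ih =>
        rw [hiter k]
        exact (descent hlam hp1 A hA b (x k)).trans ih
  -- the objective is nonnegative
  have hGp_nonneg : ∀ v : Fin n → ℝ, 0 ≤ Gp lam p v := fun v =>
    Finset.sum_nonneg fun i _ => gp_nonneg hlam hp1 (v i)
  set B : ℝ := Fp lam p A b (x 0) / lam with hB
  have hFnn : ∀ v : Fin n → ℝ, 0 ≤ Fp lam p A b v := by
    intro v
    unfold Fp
    have h1 := hGp_nonneg v
    have h2 : (0:ℝ) ≤ (1 / 2) * (l2 (A.mulVec v - b)) ^ 2 := by positivity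
    nlinarith
  have hBnn : 0 ≤ B := div_nonneg (hFnn (x 0)) hlam.le
  -- each coordinate has small penalty
  have hgB : ∀ k i, gp lam p (x k i) ≤ B := by
    intro k i
    have h1 : gp lam p (x k i) ≤ Gp lam p (x k) :=
      Finset.single_le_sum (fun j _ => gp_nonneg hlam hp1 (x k j)) (Finset.mem_univ i)
    have h2 : lam * Gp lam p (x k) ≤ Fp lam p A b (x k) := by
      unfold Fp
      have : (0:ℝ) ≤ (1 / 2) * (l2 (A.mulVec (x k) - b)) ^ 2 := by positivity
      linarith
    rw [hB, le_div_iff₀ hlam]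
    calc gp lam p (x k i) * lam = lam * gp lam p (x k i) := mul_comm _ _
      _ ≤ lam * Gp lam p (x k) := mul_le_mul_of_nonneg_left h1 hlam.le
      _ ≤ Fp lam p A b (x k) := h2
      _ ≤ Fp lam p A b (x 0) := hdec k
  -- coordinatewise bound from coercivity
  set T : ℝ := max lam 1 with hT
  have hT1 : (1:ℝ) ≤ T := le_max_right _ _
  have hT0 : (0:ℝ) < T := by linarith
  set c : ℝ := lam ^ (2 - p) with hc
  have hc0 : (0:ℝ) < c := Real.rpow_pos_of_pos hlam _
  set R0 : ℝ := T * Real.exp (B * lam / c) with hR0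
  have hexp1 : (1:ℝ) ≤ Real.exp (B * lam / c) := by
    rw [← Real.exp_zero]
    exact Real.exp_le_exp.2 (by positivity)
  have hR0T : T ≤ R0 := by
    calc T = T * 1 := (mul_one T).symm
      _ ≤ T * Real.exp (B * lam / c) := mul_le_mul_of_nonneg_left hexp1 hT0.le
  have hR00 : (0:ℝ) < R0 := lt_of_lt_of_le hT0 hR0T
  have hcoord : ∀ k i, |x k i| ≤ R0 := by
    intro k i
    by_contra hcon
    push_neg at hcon
    have habs : T ≤ |x k i| := hR0T.trans hcon.le
    have hlow := gp_lower hlam hp0 hp1 (x k i) habs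
    have hlog : Real.log R0 < Real.log |x k i| := Real.log_lt_log hR00 hcon
    have hlogR0 : Real.log R0 = Real.log T + B * lam / c := by
      rw [hR0, Real.log_mul hT0.ne' (Real.exp_pos _).ne', Real.log_exp]
    have hkey : B < c / lam * (Real.log |x k i| - Real.log T) := by
      have h1 : B * lam / c < Real.log |x k i| - Real.log T := by linarith
      have h2 : c / lam * (B * lam / c) = B := by
        field_simp
      calc B = c / lam * (B * lam / c) := h2.symm
        _ < c / lam * (Real.log |x k i| - Real.log T) :=
            mul_lt_mul_of_pos_left h1 (div_pos hc0 hlam)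
    have := hgB k i
    rw [← hc, ← hT] at hlow
    linarith
  -- conclude boundedness in the `ℓ²` norm
  refine ⟨Real.sqrt n * R0, fun k => ?_⟩
  have hsum : ∑ i, x k i ^ 2 ≤ (n : ℝ) * R0 ^ 2 := by
    calc ∑ i, x k i ^ 2 ≤ ∑ _i : Fin n, R0 ^ 2 := by
          apply Finset.sum_le_sum
          intro i _
          have h1 : |x k i| ^ 2 ≤ R0 ^ 2 :=
            pow_le_pow_left₀ (abs_nonneg _) (hcoord k i) 2
          rwa [sq_abs] at h1
      _ = (n : ℝ) * R0 ^ 2 := by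
          rw [Finset.sum_const, Finset.card_univ, Fintype.card_fin, nsmul_eq_mul]
  calc l2 (x k) ≤ Real.sqrt ((n : ℝ) * R0 ^ 2) := Real.sqrt_le_sqrt hsum
    _ = Real.sqrt n * R0 := by
        rw [Real.sqrt_mul (Nat.cast_nonneg n), Real.sqrt_sq hR00.le]

end
end
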